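/- arXiv:2508.09181 — 2 statements merged into one kernel-verified Lean document; each statement's English description precedes it below -/
import Mathlib

section
/- For the UDQ curve u(d) = α[1 - (1 - c)·((exp(1 - d/ι)·d - ι)/ι)^2] with 0 ≤ c < 1 and any ε with c < ε < 1 (guaranteeing the level set is nontrivial), the data preference range {d > 0 : u(d) ≥ εα} is a closed interval [d₋(ι), d₊(ι)] containing ι, and both endpoints scale linearly in ι: d₋(λι) = λ·d₋(ι) and d₊(λι) = λ·d₊(ι) for all λ > 0. Consequently the width d₊(ι) − d₋(ι) is strictly increasing in ι. -/
/-!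
Writing `t = d / ι` and `g t = t e^{1-t}`, the UDQ is `α (1 - (1 - c) (1 - g t)²)`, so it depends
on `d` only through `d / ι`. Since `g ≤ 1`, the condition `u ≥ ε α` reads
`g t ≥ 1 - √((1 - ε) / (1 - c))`, a level strictly between `0` and `1`. The function `g` rises from
`g 0 = 0` to its maximum `g 1 = 1` and then decays to `0`, so this superlevel set is an interval
`[a, b]` with `0 < a < 1 < b`. Hence `d₋(ι) = a ι`, `d₊(ι) = b ι`, and the width `(b - a) ι`
increases with `ι`.
-/

open Real Set Filter Topology

theorem exists_superlevel_eq_Icc_of_unimodal {f : ℝ → ℝ} {lo p m : ℝ} (hlop : lo ≤ p)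
    (hcont : ContinuousOn f (Ici lo)) (hmono : StrictMonoOn f (Icc lo p))
    (hanti : StrictAntiOn f (Ici p)) (hlo : f lo < m) (hp : m < f p)
    (htail : ∃ T, p ≤ T ∧ f T < m) :
    ∃ a b, lo < a ∧ a < p ∧ p < b ∧ {t | lo < t ∧ m ≤ f t} = Icc a b := by
  obtain ⟨T, hpT, hT⟩ := htail
  obtain ⟨a, ha, rfl⟩ :=
    intermediate_value_Icc hlop (hcont.mono Icc_subset_Ici_self) ⟨hlo.le, hp.le⟩
  obtain ⟨b, hb, hfb⟩ := intermediate_value_Icc' hpT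
    (hcont.mono fun t ht => le_trans hlop ht.1) ⟨hT.le, hp.le⟩
  have hloa : lo < a := ha.1.lt_of_ne (by rintro rfl; exact hlo.false)
  have hap : a < p := ha.2.lt_of_ne (by rintro rfl; exact hp.false)
  have hpb : p < b := hb.1.lt_of_ne (by rintro rfl; exact hp.ne hfb.symm)
  refine ⟨a, b, hloa, hap, hpb, Set.ext fun t => ⟨fun ⟨hlot, hmt⟩ => ?_, fun ⟨hat, htb⟩ => ?_⟩⟩
  · rcases le_total t p with htp | hpt
    · exact ⟨(hmono.le_iff_le ⟨hloa.le, hap.le⟩ ⟨hlot.le, htp⟩).1 hmt, htp.trans hpb.le⟩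
    · exact ⟨hap.le.trans hpt, (hanti.le_iff_ge (hpb.le : p ≤ b) hpt).1 (hfb ▸ hmt)⟩
  · refine ⟨hloa.trans_le hat, ?_⟩
    rcases le_total t p with htp | hpt
    · exact (hmono.le_iff_le ⟨hloa.le, hap.le⟩ ⟨hloa.le.trans hat, htp⟩).2 hat
    · exact hfb ▸ (hanti.le_iff_ge (hpb.le : p ≤ b) hpt).2 htb

noncomputable def udqProfile (t : ℝ) : ℝ := exp (1 - t) * t

namespace udqProfile

theorem zero : udqProfile 0 = 0 := by simp [udqProfile]

theorem one : udqProfile 1 = 1 := by simp [udqProfile]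

theorem le_one (t : ℝ) : udqProfile t ≤ 1 :=
  calc exp (1 - t) * t ≤ exp (1 - t) * exp (t - 1) := by
        gcongr; linarith [add_one_le_exp (t - 1)]
    _ = 1 := by rw [← exp_add]; simp

theorem continuous : Continuous udqProfile := by unfold udqProfile; fun_prop

theorem hasDerivAt (t : ℝ) : HasDerivAt udqProfile (exp (1 - t) * (1 - t)) t :=
  ((((hasDerivAt_id' t).const_sub 1).exp).mul (hasDerivAt_id' t)).congr_deriv (by ring)

theorem strictMonoOn : StrictMonoOn udqProfile (Icc 0 1) := by
  refine strictMonoOn_of_deriv_pos (convex_Icc 0 1) continuous.continuousOn fun t ht => ?_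
  rw [interior_Icc] at ht
  rw [(hasDerivAt t).deriv]
  exact mul_pos (exp_pos _) (by linarith [ht.2])

theorem strictAntiOn : StrictAntiOn udqProfile (Ici 1) := by
  refine strictAntiOn_of_deriv_neg (convex_Ici 1) continuous.continuousOn fun t ht => ?_
  rw [interior_Ici] at ht
  rw [(hasDerivAt t).deriv]
  exact mul_neg_of_pos_of_neg (exp_pos _) (by linarith [mem_Ioi.1 ht])

theorem tendsto_atTop : Tendsto udqProfile atTop (𝓝 0) := by
  have := (tendsto_pow_mul_exp_neg_atTop_nhds_zero 1).const_mul (exp 1)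
  rw [mul_zero] at this
  refine this.congr fun t => ?_
  simp only [udqProfile, pow_one, sub_eq_add_neg, exp_add]
  ring

theorem exists_superlevel_eq_Icc {m : ℝ} (hm0 : 0 < m) (hm1 : m < 1) :
    ∃ a b, 0 < a ∧ a < 1 ∧ 1 < b ∧ {t | 0 < t ∧ m ≤ udqProfile t} = Icc a b := by
  obtain ⟨T, hT⟩ := ((tendsto_atTop.eventually (gt_mem_nhds hm0)).and (eventually_ge_atTop 1)).exists
  exact exists_superlevel_eq_Icc_of_unimodal zero_le_one continuous.continuousOn strictMonoOn
    strictAntiOn (by rwa [zero]) (by rwa [one]) ⟨T, hT.2, hT.1⟩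

end udqProfile

theorem le_mul_one_sub_mul_sq_iff {α c ε x : ℝ} (hα : 0 < α) (hc : c < 1) :
    ε * α ≤ α * (1 - (1 - c) * x ^ 2) ↔ x ^ 2 ≤ (1 - ε) / (1 - c) := by
  rw [le_div_iff₀ (sub_pos.2 hc), mul_comm ε, mul_le_mul_iff_right₀ hα]
  constructor <;> intro <;> linarith

theorem udq_eq_udqProfile {α c ι d : ℝ} (hι : ι ≠ 0) :
    α * (1 - (1 - c) * ((exp (1 - d / ι) * d - ι) / ι) ^ 2) =
      α * (1 - (1 - c) * (1 - udqProfile (d / ι)) ^ 2) := by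
  rw [udqProfile]; field_simp; ring

theorem preference_range_width_monotone_general (α c ε : ℝ) (hα : 0 < α)
    (hc1 : c < 1) (hεc : c < ε) (hε1 : ε < 1)
    (u : ℝ → ℝ → ℝ)
    (hu : ∀ ι d, u ι d = α * (1 - (1 - c) * ((Real.exp (1 - d / ι) * d - ι) / ι) ^ 2)) :
    ∃ dlo dhi : ℝ → ℝ,
      (∀ ι : ℝ, 0 < ι →
        {d : ℝ | 0 < d ∧ ε * α ≤ u ι d} = Set.Icc (dlo ι) (dhi ι) ∧
        0 < dlo ι ∧ dlo ι ≤ ι ∧ ι ≤ dhi ι ∧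
        (∀ lam : ℝ, 0 < lam → dlo (lam * ι) = lam * dlo ι ∧ dhi (lam * ι) = lam * dhi ι)) ∧
      StrictMonoOn (fun ι => dhi ι - dlo ι) (Set.Ioi 0) := by
  have hK : 0 < (1 - ε) / (1 - c) := div_pos (by linarith) (by linarith)
  set r := √((1 - ε) / (1 - c))
  have hr1 : r < 1 := (sqrt_lt' one_pos).2 (by rw [one_pow, div_lt_one (by linarith)]; linarith)
  obtain ⟨a, b, ha0, ha1, hb1, hab⟩ :=
    udqProfile.exists_superlevel_eq_Icc (m := 1 - r) (by linarith) (by linarith [sqrt_pos.2 hK])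
  have hrange : ∀ ι, 0 < ι →
      {d | 0 < d ∧ ε * α ≤ u ι d} = (· / ι) ⁻¹' {t | 0 < t ∧ 1 - r ≤ udqProfile t} := by
    intro ι hι
    ext d
    rw [mem_ofPred, hu, udq_eq_udqProfile hι.ne', le_mul_one_sub_mul_sq_iff hα hc1,
      ← le_sqrt (sub_nonneg.2 (udqProfile.le_one _)) hK.le, sub_le_comm, mem_preimage, mem_ofPred,
      div_pos_iff_of_pos_right hι]
  refine ⟨fun ι => a * ι, fun ι => b * ι, fun ι hι => ⟨?_, by positivity, by nlinarith,
    by nlinarith, fun lam _ => ⟨by ring, by ring⟩⟩, fun x _ y _ hxy => ?_⟩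
  · rw [hrange ι hι, hab]
    ext d
    simp only [mem_preimage, mem_Icc, le_div_iff₀ hι, div_le_iff₀ hι]
  · dsimp only
    rw [← sub_mul, ← sub_mul]
    exact mul_lt_mul_of_pos_left hxy (by linarith)

/-- Proposition 1 (θ = 1 case): the data preference range {d > 0 : u(d;ι) ≥ εα}
is a closed interval [d₋(ι), d₊(ι)] containing ι, both endpoints scale linearly
in ι, and consequently the width d₊(ι) − d₋(ι) is strictly increasing in ι. -/
theorem preference_range_width_monotone (α c ε : ℝ) (hα : 0 < α) (hc0 : 0 ≤ c)
    (hc1 : c < 1) (hεc : c < ε) (hε1 : ε < 1)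
    (u : ℝ → ℝ → ℝ)
    (hu : ∀ ι d, u ι d = α * (1 - (1 - c) * ((Real.exp (1 - d / ι) * d - ι) / ι) ^ 2)) :
    ∃ dlo dhi : ℝ → ℝ,
      (∀ ι : ℝ, 0 < ι →
        {d : ℝ | 0 < d ∧ ε * α ≤ u ι d} = Set.Icc (dlo ι) (dhi ι) ∧
        0 < dlo ι ∧ dlo ι ≤ ι ∧ ι ≤ dhi ι ∧
        (∀ lam : ℝ, 0 < lam → dlo (lam * ι) = lam * dlo ι ∧ dhi (lam * ι) = lam * dhi ι)) ∧
      StrictMonoOn (fun ι => dhi ι - dlo ι) (Set.Ioi 0) :=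
  preference_range_width_monotone_general α c ε hα hc1 hεc hε1 u hu
end

section
/- The communication energy E(B) = ((2^{s/B} − 1)·B·ϱ)/(h·s), viewed as a function of allocated bandwidth B > 0 with fixed rate s > 0, channel coefficient h > 0, and model size ϱ > 0, is strictly decreasing and convex in B, and E(B) → (ϱ·ln 2)/h as B → ∞. -/
open Real Set Filter

/-! With `a = s log 2` we have `2 ^ (s / B) = exp (a / B)`, so `E` is the positive multiple
`ϱ / (h s)` of `B ↦ B (exp (a / B) - 1)`, the perspective of `t ↦ exp (a t) - 1`. Its derivative
`exp t (1 - t) - 1` at `t = a / B` is negative because `1 - t < exp (-t)`, its second derivative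
`a² exp (a / B) / B³` is nonnegative, and as `B → ∞` it is the difference quotient of
`t ↦ exp (a t)` at `0` with step `1 / B`, which tends to `a`. -/

lemma exp_mul_one_sub_lt_one {t : ℝ} (ht : t ≠ 0) : exp t * (1 - t) < 1 := by
  have hlt : 1 - t < exp (-t) := by linarith [add_one_lt_exp (neg_ne_zero.mpr ht)]
  calc exp t * (1 - t) < exp t * exp (-t) := mul_lt_mul_of_pos_left hlt (exp_pos t)
    _ = 1 := by rw [← exp_add, add_neg_cancel, exp_zero]

section Perspective

variable (a : ℝ) {x : ℝ}

lemma hasDerivAt_const_div (hx : x ≠ 0) : HasDerivAt (fun B => a / B) (-(a / x ^ 2)) x := by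
  simpa [div_eq_mul_inv] using (hasDerivAt_inv hx).const_mul a

lemma hasDerivAt_mul_exp_div_sub_one (hx : x ≠ 0) :
    HasDerivAt (fun B => B * (exp (a / B) - 1)) (exp (a / x) * (1 - a / x) - 1) x := by
  have hdiv := hasDerivAt_const_div a hx
  refine ((hasDerivAt_id' x).mul (hdiv.exp.sub_const 1)).congr_deriv ?_
  field_simp
  ring

lemma hasDerivAt_exp_div_mul_one_sub_div_sub_one (hx : x ≠ 0) :
    HasDerivAt (fun B => exp (a / B) * (1 - a / B) - 1) (a ^ 2 * exp (a / x) / x ^ 3) x := by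
  have hdiv := hasDerivAt_const_div a hx
  refine ((hdiv.exp.mul (hdiv.const_sub 1)).sub_const 1).congr_deriv ?_
  field_simp
  ring

lemma strictAntiOn_mul_exp_div_sub_one {a : ℝ} (ha : a ≠ 0) :
    StrictAntiOn (fun B => B * (exp (a / B) - 1)) (Ioi 0) := by
  refine strictAntiOn_of_hasDerivWithinAt_neg (convex_Ioi 0)
    (fun x hx => (hasDerivAt_mul_exp_div_sub_one a hx.ne').continuousAt.continuousWithinAt)
    (fun x hx => (hasDerivAt_mul_exp_div_sub_one a (interior_subset hx).ne').hasDerivWithinAt)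
    fun x hx => ?_
  linarith [exp_mul_one_sub_lt_one (div_ne_zero ha (interior_subset hx).ne')]

lemma convexOn_mul_exp_div_sub_one : ConvexOn ℝ (Ioi 0) (fun B => B * (exp (a / B) - 1)) := by
  refine convexOn_of_hasDerivWithinAt2_nonneg (convex_Ioi 0)
    (fun x hx => (hasDerivAt_mul_exp_div_sub_one a hx.ne').continuousAt.continuousWithinAt)
    (fun x hx => (hasDerivAt_mul_exp_div_sub_one a (interior_subset hx).ne').hasDerivWithinAt)
    (fun x hx =>
      (hasDerivAt_exp_div_mul_one_sub_div_sub_one a (interior_subset hx).ne').hasDerivWithinAt)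
    fun x hx => ?_
  have hx : 0 < x := interior_subset hx
  positivity

lemma tendsto_mul_exp_div_sub_one_atTop :
    Tendsto (fun B => B * (exp (a / B) - 1)) atTop (nhds a) := by
  have hslope : Tendsto (slope (fun t => exp (a * t)) 0) (nhdsWithin 0 {0}ᶜ) (nhds a) := by
    have hderiv : HasDerivAt (fun t => exp (a * t)) a 0 := by
      simpa using ((hasDerivAt_id (0 : ℝ)).const_mul a).exp
    exact hasDerivAt_iff_tendsto_slope.mp hderiv
  have hinv : Tendsto (fun B : ℝ => B⁻¹) atTop (nhdsWithin 0 {0}ᶜ) :=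
    tendsto_inv_atTop_nhdsGT_zero.mono_right (nhdsWithin_mono 0 fun t ht => ne_of_gt ht)
  refine (hslope.comp hinv).congr' ?_
  filter_upwards [eventually_gt_atTop 0] with B hB
  simp [slope_def_field, div_eq_mul_inv, mul_comm]

end Perspective

/-- The communication energy E(B) = ((2^{s/B} − 1)·B·ϱ)/(h·s) is strictly
decreasing and convex in the bandwidth B > 0, and E(B) → ϱ·ln 2 / h as B → ∞. -/
theorem communication_energy_properties (s h ϱ : ℝ) (hs : 0 < s) (hh : 0 < h)
    (hϱ : 0 < ϱ) (E : ℝ → ℝ)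
    (hE : ∀ B, E B = (((2 : ℝ) ^ (s / B) - 1) * B * ϱ) / (h * s)) :
    StrictAntiOn E (Set.Ioi 0) ∧
    ConvexOn ℝ (Set.Ioi 0) E ∧
    Filter.Tendsto E Filter.atTop (nhds (ϱ * Real.log 2 / h)) := by
  have hc : 0 < ϱ / (h * s) := by positivity
  have hE' : E = fun B => ϱ / (h * s) * (B * (exp (s * log 2 / B) - 1)) := by
    ext B
    rw [hE, rpow_def_of_pos two_pos, show log 2 * (s / B) = s * log 2 / B by ring]
    ring
  have hlim : ϱ / (h * s) * (s * log 2) = ϱ * log 2 / h := by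
    field_simp
  refine hE' ▸ ⟨fun x hx y hy hxy => ?_, ?_, ?_⟩
  · exact mul_lt_mul_of_pos_left (strictAntiOn_mul_exp_div_sub_one (by positivity) hx hy hxy) hc
  · exact (convexOn_mul_exp_div_sub_one _).smul hc.le
  · exact hlim ▸ (tendsto_mul_exp_div_sub_one_atTop _).const_mul _
end
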